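/- Let n and k be integers with k ≥ 3 and n ≥ 4k−2, and let B be a Steiner system S(k−1, k, n): a family of k-element subsets (blocks) of {1,...,n} such that every (k−1)-element subset of {1,...,n} is contained in exactly one block. Then B is a resolving set for the Kneser graph K(n,k), and consequently β(K(n,k)) ≤ C(n,k−1)/k, where C(n,k−1) denotes the binomial coefficient. -/

import Mathlib

/-- The Johnson graph `J(n,k)`: vertices are the `k`-element subsets of `{1,...,n}`,
two vertices adjacent iff their intersection has `k-1` elements. -/
def johnsonGraph (n k : ℕ) : SimpleGraph {s : Finset (Fin n) // s.card = k} where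
  Adj U W := U ≠ W ∧ (U.1 ∩ W.1).card = k - 1
  symm := by
    constructor
    intro U W h
    exact ⟨h.1.symm, by rw [Finset.inter_comm]; exact h.2⟩
  loopless := by
    constructor
    intro U h
    exact h.1 rfl

/-- The Kneser graph `K(n,k)`: vertices are the `k`-element subsets of `{1,...,n}`,
two vertices adjacent iff the corresponding subsets are disjoint. -/
def kneserGraph (n k : ℕ) : SimpleGraph {s : Finset (Fin n) // s.card = k} where
  Adj U W := U ≠ W ∧ Disjoint U.1 W.1
  symm := by
    constructor
    intro U W h
    exact ⟨h.1.symm, h.2.symm⟩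
  loopless := by
    constructor
    intro U h
    exact h.1 rfl

/-- A set `S` of vertices is a resolving set for `G` if every pair of distinct
vertices is resolved by some vertex of `S`, i.e. is at different distances from it. -/
def resolvingSet {V : Type*} (G : SimpleGraph V) (S : Set V) : Prop :=
  ∀ u v : V, u ≠ v → ∃ x ∈ S, G.dist u x ≠ G.dist v x

/-- The metric dimension `β(G)`: the minimum cardinality of a resolving set for `G`. -/
noncomputable def metricDim {V : Type*} (G : SimpleGraph V) : ℕ :=
  sInf {m | ∃ S : Finset V, resolvingSet G ↑S ∧ S.card = m}

/-!
Given distinct `k`-sets `u`, `v`, pick `x ∈ u \ v`, a `(k-3)`-set `R` outside `u ∪ v`, and put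
`P = {x} ∪ R`. For each of the more than `k` points `c` outside `u ∪ v ∪ R`, the block through
`P ∪ {c}` contains `x`, so it is not adjacent to `u`. If every such block met `v`, two of them
would meet `v` in the same point `y`; sharing the `(k-1)`-set `P ∪ {y}` they coincide, yet then
contain `P ∪ {y, c, c'}`, which has `k + 1` points. So some block is disjoint from `v`, i.e.
adjacent to `v` but not to `u`. The bound on `β` is the count `|B| · k = C(n, k-1)`.
-/

open Finset

theorem metricDim_le_card {V : Type*} {G : SimpleGraph V} (S : Finset V)
    (hS : resolvingSet G ↑S) : metricDim G ≤ #S :=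
  Nat.sInf_le ⟨S, hS, rfl⟩

theorem SimpleGraph.dist_ne_of_adj_of_not_adj {V : Type*} {G : SimpleGraph V} {u v w : V}
    (hv : G.Adj v w) (hu : ¬G.Adj u w) : G.dist u w ≠ G.dist v w := by
  rw [SimpleGraph.dist_eq_one_iff_adj.mpr hv]
  exact fun h => hu (SimpleGraph.dist_eq_one_iff_adj.mp h)

theorem kneserGraph_adj_iff {n k : ℕ} (hk : 0 < k) {U W : {s : Finset (Fin n) // s.card = k}} :
    (kneserGraph n k).Adj U W ↔ Disjoint U.1 W.1 := by
  refine ⟨And.right, fun h => ⟨fun hUW => ?_, h⟩⟩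
  rw [hUW, disjoint_self, bot_eq_empty, ← card_eq_zero, W.2] at h
  omega

def IsSteinerSystem {α : Type*} (t k : ℕ) (B : Finset (Finset α)) : Prop :=
  (∀ b ∈ B, #b = k) ∧ ∀ T : Finset α, #T = t → ∃! b, b ∈ B ∧ T ⊆ b

namespace IsSteinerSystem

variable {α : Type*} [DecidableEq α] {t k : ℕ} {B : Finset (Finset α)}

theorem biUnion_powersetCard [Fintype α] (hB : IsSteinerSystem t k B) :
    B.biUnion (powersetCard t) = powersetCard t univ := by
  ext T
  simp only [mem_biUnion, mem_powersetCard, subset_univ, true_and]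
  constructor
  · rintro ⟨b, -, -, hT⟩
    exact hT
  · intro hT
    obtain ⟨b, hbB, hTb⟩ := (hB.2 T hT).exists
    exact ⟨b, hbB, hTb, hT⟩

theorem card_mul_choose [Fintype α] (hB : IsSteinerSystem t k B) :
    #B * k.choose t = (Fintype.card α).choose t := by
  have hdisj : (B : Set (Finset α)).PairwiseDisjoint (powersetCard t) := by
    intro b hb b' hb' hne
    refine disjoint_left.mpr fun T hTb hTb' => hne ?_
    rw [mem_powersetCard] at hTb hTb'
    exact (hB.2 T hTb.2).unique ⟨hb, hTb.1⟩ ⟨hb', hTb'.1⟩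
  calc #B * k.choose t = ∑ b ∈ B, #(powersetCard t b) := by
        rw [sum_congr rfl fun b hb => by rw [card_powersetCard, hB.1 b hb], sum_const, smul_eq_mul]
    _ = #(powersetCard t (univ : Finset α)) := by
        rw [← card_biUnion hdisj, hB.biUnion_powersetCard]
    _ = (Fintype.card α).choose t := by rw [card_powersetCard, card_univ]

theorem card_eq_choose_div [Fintype α] (hB : IsSteinerSystem (k - 1) k B) (hk : 0 < k) :
    #B = (Fintype.card α).choose (k - 1) / k := by
  have hchoose : k.choose (k - 1) = k := by
    obtain ⟨m, rfl⟩ := Nat.exists_eq_add_of_lt hk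
    simp
  rw [← hB.card_mul_choose, hchoose, Nat.mul_div_cancel _ hk]

theorem exists_mem_disjoint (hB : IsSteinerSystem (k - 1) k B) {P v D : Finset α}
    (hP : #P + 2 = k) (hPv : Disjoint P v) (hDP : Disjoint D P) (hDv : Disjoint D v)
    (hvD : #v < #D) : ∃ b ∈ B, P ⊆ b ∧ Disjoint b v := by
  by_contra! hmeet
  have hblock : ∀ c ∈ D, ∃ b ∈ B, insert c P ⊆ b := fun c hc =>
    (hB.2 _ (by rw [card_insert_of_notMem (disjoint_left.mp hDP hc)]; omega)).exists
  choose! blk hblkB hblk using hblock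
  have hy : ∀ c ∈ D, ∃ y ∈ v, y ∈ blk c := fun c hc => by
    obtain ⟨y, hyb, hyv⟩ := not_disjoint_iff.mp
      (hmeet _ (hblkB c hc) ((subset_insert c P).trans (hblk c hc)))
    exact ⟨y, hyv, hyb⟩
  choose! y hyv hyblk using hy
  obtain ⟨c, hc, c', hc', hne, hyc⟩ := exists_ne_map_eq_of_card_lt_of_maps_to hvD hyv
  have hyP : y c ∉ P := disjoint_right.mp hPv (hyv c hc)
  have hsame : blk c' = blk c := by
    refine (hB.2 (insert (y c) P) (by rw [card_insert_of_notMem hyP]; omega)).unique ?_ ?_ <;>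
      refine ⟨hblkB _ ‹_›, insert_subset ?_ ((subset_insert _ P).trans (hblk _ ‹_›))⟩
    · rw [hyc]; exact hyblk c' hc'
    · exact hyblk c hc
  have hsub : insert c (insert c' (insert (y c) P)) ⊆ blk c := by
    refine insert_subset (hblk c hc (mem_insert_self c P)) (insert_subset ?_ (insert_subset
      (hyblk c hc) ((subset_insert c P).trans (hblk c hc))))
    rw [← hsame]; exact hblk c' hc' (mem_insert_self c' P)
  have hcv : ∀ d ∈ D, d ≠ y c := fun d hd h => disjoint_left.mp hDv hd (h ▸ hyv c hc)
  have hcard := (card_le_card hsub).trans (hB.1 _ (hblkB c hc)).le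
  rw [card_insert_of_notMem, card_insert_of_notMem, card_insert_of_notMem hyP] at hcard
  · omega
  · simp only [mem_insert, not_or]
    exact ⟨hcv c' hc', disjoint_left.mp hDP hc'⟩
  · simp only [mem_insert, not_or]
    exact ⟨hne, hcv c hc, disjoint_left.mp hDP hc⟩

theorem resolvingSet_kneserGraph {n k : ℕ} {B : Finset (Finset (Fin n))}
    (hB : IsSteinerSystem (k - 1) k B) (hk : 3 ≤ k) (hn : 4 * k - 2 ≤ n) :
    resolvingSet (kneserGraph n k) {X | X.1 ∈ B} := by
  intro u v huv
  obtain ⟨x, hxu, hxv⟩ : ∃ x ∈ u.1, x ∉ v.1 := not_subset.mp fun h =>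
    huv (Subtype.ext (eq_of_subset_of_card_le h (by rw [u.2, v.2])))
  set C := (u.1 ∪ v.1)ᶜ
  have hC : 2 * k - 2 ≤ #C := by
    have := card_union_le u.1 v.1
    rw [card_compl, Fintype.card_fin, u.2, v.2] at *
    omega
  obtain ⟨R, hRC, hR⟩ := exists_subset_card_eq (s := C) (n := k - 3) (by omega)
  have hCu : Disjoint C u.1 := disjoint_compl_left.mono_right subset_union_left
  have hCv : Disjoint C v.1 := disjoint_compl_left.mono_right subset_union_right
  have hxR : x ∉ R := fun h => disjoint_left.mp hCu (hRC h) hxu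
  obtain ⟨b, hbB, hPb, hbv⟩ := hB.exists_mem_disjoint (P := insert x R) (D := C \ R)
    (by rw [card_insert_of_notMem hxR]; omega)
    (disjoint_insert_left.mpr ⟨hxv, hCv.mono_left hRC⟩)
    (disjoint_insert_right.mpr ⟨fun h => disjoint_left.mp hCu (mem_sdiff.mp h).1 hxu,
      sdiff_disjoint⟩)
    (hCv.mono_left sdiff_subset)
    (by rw [card_sdiff_of_subset hRC, v.2]; omega)
  let w : {s : Finset (Fin n) // s.card = k} := ⟨b, hB.1 b hbB⟩
  refine ⟨w, hbB, SimpleGraph.dist_ne_of_adj_of_not_adj ?_ ?_⟩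
  · exact (kneserGraph_adj_iff (by omega)).mpr hbv.symm
  · rw [kneserGraph_adj_iff (by omega)]
    exact fun h => disjoint_left.mp h hxu (hPb (mem_insert_self x R))

end IsSteinerSystem

/-- For `k ≥ 3` and `n ≥ 4k−2`, the blocks of a Steiner system `S(k−1,k,n)` form a
resolving set for the Kneser graph `K(n,k)`; consequently `β(K(n,k)) ≤ C(n,k−1)/k`. -/
theorem steiner_system_resolving_kneser (n k : ℕ) (hk : 3 ≤ k) (hn : 4 * k - 2 ≤ n)
    (B : Finset (Finset (Fin n)))
    (hcard : ∀ b ∈ B, b.card = k)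
    (hsteiner : ∀ T : Finset (Fin n), T.card = k - 1 → ∃! b, b ∈ B ∧ T ⊆ b) :
    resolvingSet (kneserGraph n k) {X | X.1 ∈ B} ∧
    metricDim (kneserGraph n k) ≤ Nat.choose n (k - 1) / k := by
  have hB : IsSteinerSystem (k - 1) k B := ⟨hcard, hsteiner⟩
  have hres := hB.resolvingSet_kneserGraph hk hn
  refine ⟨hres, ?_⟩
  have hcoe : (↑(B.subtype fun s => #s = k) : Set {s : Finset (Fin n) // #s = k}) =
      {X | X.1 ∈ B} := by
    ext X
    simp
  calc metricDim (kneserGraph n k) ≤ #(B.subtype fun s => #s = k) :=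
        metricDim_le_card _ (hcoe ▸ hres)
    _ = #B := by rw [card_subtype, filter_true_of_mem hcard]
    _ = n.choose (k - 1) / k := by rw [hB.card_eq_choose_div (by omega), Fintype.card_fin]
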